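/- On ℝ⁷ with coordinates (u₁,u₂,u₃,x₁,x₂,x₃,x₄), the rank-4 distribution D spanned by Z₁ = x₂∂_{u₁} - x₁∂_{u₂} + x₃∂_{u₃} + ∂_{x₄}, Z₂ = x₁∂_{u₁} - x₂∂_{u₂} - ∂_{x₃}, Z₃ = x₁∂_{u₃} + ∂_{x₂}, Z₄ = ∂_{x₁} admits the three commuting Lie symmetries S₁ = ∂_{u₁}, S₂ = ∂_{u₂}, S₃ = ∂_{u₃}, and D ⊕ ⟨S₁,S₂,S₃⟩ = Tℝ⁷ at every point. -/

import Mathlib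

noncomputable def lieBracket {n : ℕ} (X Y : (Fin n → ℝ) → (Fin n → ℝ)) :
    (Fin n → ℝ) → (Fin n → ℝ) :=
  fun p => fderiv ℝ Y p (X p) - fderiv ℝ X p (Y p)

/- Coordinates on `ℝ⁷`: `p 0 = u₁`, `p 1 = u₂`, `p 2 = u₃`, `p 3 = x₁`, `p 4 = x₂`,
`p 5 = x₃`, `p 6 = x₄`. The flat quaternionic contact `(4,7)` distribution. -/
noncomputable def Z1 : (Fin 7 → ℝ) → (Fin 7 → ℝ) := fun p => ![p 4, -(p 3), p 5, 0, 0, 0, 1]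
noncomputable def Z2 : (Fin 7 → ℝ) → (Fin 7 → ℝ) := fun p => ![p 3, -(p 4), 0, 0, 0, -1, 0]
noncomputable def Z3 : (Fin 7 → ℝ) → (Fin 7 → ℝ) := fun p => ![0, 0, p 3, 0, 1, 0, 0]
noncomputable def Z4 : (Fin 7 → ℝ) → (Fin 7 → ℝ) := fun _ => ![0, 0, 0, 1, 0, 0, 0]

noncomputable def D (p : Fin 7 → ℝ) : Submodule ℝ (Fin 7 → ℝ) :=
  Submodule.span ℝ {Z1 p, Z2 p, Z3 p, Z4 p}

noncomputable def S1 : (Fin 7 → ℝ) → (Fin 7 → ℝ) := fun _ => ![1, 0, 0, 0, 0, 0, 0]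
noncomputable def S2 : (Fin 7 → ℝ) → (Fin 7 → ℝ) := fun _ => ![0, 1, 0, 0, 0, 0, 0]
noncomputable def S3 : (Fin 7 → ℝ) → (Fin 7 → ℝ) := fun _ => ![0, 0, 1, 0, 0, 0, 0]

lemma cv5 (a0 a1 a2 a3 a4 a5 a6 : ℝ) : ![a0,a1,a2,a3,a4,a5,a6] 5 = a5 := rfl
lemma cv6 (a0 a1 a2 a3 a4 a5 a6 : ℝ) : ![a0,a1,a2,a3,a4,a5,a6] 6 = a6 := rfl

/-- `D q` only depends on coordinates 3,4,5 of `q`. -/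
lemma D_eq_of_coords {q r : Fin 7 → ℝ} (h3 : q 3 = r 3) (h4 : q 4 = r 4) (h5 : q 5 = r 5) :
    D q = D r := by
  unfold D Z1 Z2 Z3 Z4
  rw [h3, h4, h5]

lemma D_invariant (p v : Fin 7 → ℝ) (h3 : v 3 = 0) (h4 : v 4 = 0) (h5 : v 5 = 0) (t : ℝ) :
    D (p + t • v) = D p := by
  refine D_eq_of_coords ?_ ?_ ?_ <;> simp [h3, h4, h5]

/-- Directional derivative of a section of `D`, in a direction not affecting coords 3,4,5,
stays in `D`. -/
lemma deriv_mem_D (v : Fin 7 → ℝ) (h3 : v 3 = 0) (h4 : v 4 = 0) (h5 : v 5 = 0)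
    (X : (Fin 7 → ℝ) → (Fin 7 → ℝ)) (hX : ContDiff ℝ (⊤ : ℕ∞) X) (hXD : ∀ p, X p ∈ D p)
    (p : Fin 7 → ℝ) : fderiv ℝ X p v ∈ D p := by
  have hXd : Differentiable ℝ X := hX.differentiable (by simp)
  have hc : HasDerivAt (fun t : ℝ => p + t • v) v 0 := by
    simpa using ((hasDerivAt_id (0 : ℝ)).smul_const v).const_add p
  have hfd : HasFDerivAt X (fderiv ℝ X p) (p + (0 : ℝ) • v) := by
    simpa using (hXd p).hasFDerivAt
  have hg : HasDerivAt (fun t : ℝ => X (p + t • v)) (fderiv ℝ X p v) 0 :=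
    hfd.comp_hasDerivAt 0 hc
  have hmem : ∀ t : ℝ, X (p + t • v) ∈ D p := fun t => by
    rw [← D_invariant p v h3 h4 h5 t]; exact hXD _
  have hcl : IsClosed (D p : Set (Fin 7 → ℝ)) := (D p).closed_of_finiteDimensional
  have hT := hasDerivAt_iff_tendsto_slope.mp hg
  refine hcl.mem_of_tendsto hT (Filter.Eventually.of_forall fun t => ?_)
  rw [slope_def_module]
  exact (D p).smul_mem _ ((D p).sub_mem (hmem t) (hmem 0))

lemma lieBracket_const (v : Fin 7 → ℝ) (X : (Fin 7 → ℝ) → (Fin 7 → ℝ)) (p : Fin 7 → ℝ) :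
    lieBracket (fun _ => v) X p = fderiv ℝ X p v := by
  simp [lieBracket]

/-- The flat qc structure in dimension 7 is a three-contact structure. -/
theorem qc7_three_contact :
    (lieBracket S1 S2 = 0 ∧ lieBracket S1 S3 = 0 ∧ lieBracket S2 S3 = 0) ∧
    (∀ S ∈ ({S1, S2, S3} : Set ((Fin 7 → ℝ) → (Fin 7 → ℝ))),
      ∀ X : (Fin 7 → ℝ) → (Fin 7 → ℝ), ContDiff ℝ (⊤ : ℕ∞) X → (∀ p, X p ∈ D p) →
        ∀ p, lieBracket S X p ∈ D p) ∧
    (∀ p : Fin 7 → ℝ,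
      D p ⊔ Submodule.span ℝ {S1 p, S2 p, S3 p} = ⊤ ∧
      D p ⊓ Submodule.span ℝ {S1 p, S2 p, S3 p} = ⊥) := by
  refine ⟨⟨?_, ?_, ?_⟩, ?_, ?_⟩
  · funext p; unfold lieBracket S1 S2; simp
  · funext p; unfold lieBracket S1 S3; simp
  · funext p; unfold lieBracket S2 S3; simp
  · rintro S hS X hX hXD p
    simp only [Set.mem_insert_iff, Set.mem_singleton_iff] at hS
    rcases hS with rfl | rfl | rfl
    · rw [show S1 = (fun _ => (![1, 0, 0, 0, 0, 0, 0] : Fin 7 → ℝ)) from rfl,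
        lieBracket_const]
      exact deriv_mem_D _ rfl rfl rfl X hX hXD p
    · rw [show S2 = (fun _ => (![0, 1, 0, 0, 0, 0, 0] : Fin 7 → ℝ)) from rfl,
        lieBracket_const]
      exact deriv_mem_D _ rfl rfl rfl X hX hXD p
    · rw [show S3 = (fun _ => (![0, 0, 1, 0, 0, 0, 0] : Fin 7 → ℝ)) from rfl,
        lieBracket_const]
      exact deriv_mem_D _ rfl rfl rfl X hX hXD p
  · intro p
    have hZ1 : Z1 p ∈ D p := Submodule.subset_span (by simp)
    have hZ2 : Z2 p ∈ D p := Submodule.subset_span (by simp)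
    have hZ3 : Z3 p ∈ D p := Submodule.subset_span (by simp)
    have hZ4 : Z4 p ∈ D p := Submodule.subset_span (by simp)
    have hS1 : S1 p ∈ Submodule.span ℝ {S1 p, S2 p, S3 p} := Submodule.subset_span (by simp)
    have hS2 : S2 p ∈ Submodule.span ℝ {S1 p, S2 p, S3 p} := Submodule.subset_span (by simp)
    have hS3 : S3 p ∈ Submodule.span ℝ {S1 p, S2 p, S3 p} := Submodule.subset_span (by simp)
    constructor
    · rw [eq_top_iff]
      rintro v -
      rw [Submodule.mem_sup]
      refine ⟨v 6 • Z1 p + (-(v 5)) • Z2 p + v 4 • Z3 p + v 3 • Z4 p,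
        ?_,
        (v 0 - v 6 * p 4 + v 5 * p 3) • S1 p + (v 1 + v 6 * p 3 - v 5 * p 4) • S2 p
          + (v 2 - v 6 * p 5 - v 4 * p 3) • S3 p, ?_, ?_⟩
      · exact Submodule.add_mem _ (Submodule.add_mem _ (Submodule.add_mem _
          (Submodule.smul_mem _ _ hZ1) (Submodule.smul_mem _ _ hZ2))
          (Submodule.smul_mem _ _ hZ3)) (Submodule.smul_mem _ _ hZ4)
      · exact Submodule.add_mem _ (Submodule.add_mem _
          (Submodule.smul_mem _ _ hS1) (Submodule.smul_mem _ _ hS2))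
          (Submodule.smul_mem _ _ hS3)
      · funext i
        fin_cases i <;>
          simp [Z1, Z2, Z3, Z4, S1, S2, S3, cv5, cv6] <;> ring
    · rw [eq_bot_iff]
      rintro v ⟨hvD, hvS⟩
      -- from membership in span of S's : coords 3,4,5,6 vanish
      have hS : v 3 = 0 ∧ v 4 = 0 ∧ v 5 = 0 ∧ v 6 = 0 := by
        refine Submodule.span_induction ?_ ?_ ?_ ?_ hvS
        · rintro x hx
          simp only [Set.mem_insert_iff, Set.mem_singleton_iff] at hx
          rcases hx with rfl | rfl | rfl <;> simp [S1, S2, S3, cv5, cv6]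
        · simp
        · rintro x y - - ⟨a1, a2, a3, a4⟩ ⟨b1, b2, b3, b4⟩
          simp [a1, a2, a3, a4, b1, b2, b3, b4]
        · rintro a x - ⟨a1, a2, a3, a4⟩
          simp [a1, a2, a3, a4]
      -- from membership in D : the three linear relations
      have hD : v 0 + p 3 * v 5 - p 4 * v 6 = 0 ∧ v 1 - p 4 * v 5 + p 3 * v 6 = 0 ∧
          v 2 - p 3 * v 4 - p 5 * v 6 = 0 := by
        refine Submodule.span_induction ?_ ?_ ?_ ?_ hvD
        · rintro x hx
          simp only [Set.mem_insert_iff, Set.mem_singleton_iff] at hx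
          rcases hx with rfl | rfl | rfl | rfl <;> refine ⟨?_, ?_, ?_⟩ <;> simp [Z1, Z2, Z3, Z4, cv5, cv6] <;> ring
        · simp
        · rintro x y - - ⟨a1, a2, a3⟩ ⟨b1, b2, b3⟩
          refine ⟨?_, ?_, ?_⟩ <;> simp only [Pi.add_apply] <;> linarith
        · rintro a x - ⟨a1, a2, a3⟩
          simp only [Pi.smul_apply, smul_eq_mul]
          exact ⟨by linear_combination a * a1, by linear_combination a * a2,
            by linear_combination a * a3⟩
      obtain ⟨h3, h4, h5, h6⟩ := hS
      obtain ⟨e1, e2, e3⟩ := hD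
      have h0 : v 0 = 0 := by rw [h5, h6] at e1; linarith
      have h1 : v 1 = 0 := by rw [h5, h6] at e2; linarith
      have h2 : v 2 = 0 := by rw [h4, h6] at e3; linarith
      have : v = 0 := by
        funext i; fin_cases i <;> assumption
      simp [this]
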